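/- arXiv:1808.04149 — 2 statements merged into one kernel-verified Lean document; each statement's English description precedes it below -/
import Mathlib

section
/- Hybrid activation is stable under network union: if every target reaction in R_T is both topologically activated and stoichiometrically activated from seeds S in network G₁ (with all reactions in G₂ \ G₁ having lower flux bound 0), then every target reaction in R_T is both topologically and stoichiometrically activated from S in G₁ ∪ G₂. -/
/-- The scope of a seed set `S` in a metabolic network. -/
def mScope {R M : Type*} (Rset : Set R) (rcts prds : R → Set M)
    (S : Set M) : Set M :=
  ⋂₀ {X | S ⊆ X ∧ ∀ r ∈ Rset, rcts r ⊆ X → prds r ⊆ X}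

/-- Hybrid activation is stable under network union: if every target reaction
in `RT` is both topologically activated (its reactants lie in the scope of
`S`) and stoichiometrically activated (some flux vector within the bounds is
mass-balanced at every metabolite and strictly positive on the targets) in
the network with reaction set `R1`, and all new reactions of `R2 \ R1` have
lower flux bound `0`, then every target reaction in `RT` is both
topologically and stoichiometrically activated from `S` in the union network
with reaction set `R1 ∪ R2`. -/
theorem hybridActivated_union {R M : Type*} [Fintype M] [DecidableEq R]
    (R1 R2 RT : Finset R)
    (rcts prds : R → Set M) (S : Set M)
    (pc : R → M → ℝ) (rc : M → R → ℝ) (lb ub : R → ℝ)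
    (hbounds : ∀ r, 0 ≤ lb r ∧ lb r ≤ ub r)
    (hnew : ∀ r ∈ R2 \ R1, lb r = 0)
    (hRT : RT ⊆ R1)
    (htop : ∀ rT ∈ RT, rcts rT ⊆ mScope (↑R1) rcts prds S)
    (hsto : ∃ v : R → ℝ,
      (∀ r ∈ R1, lb r ≤ v r ∧ v r ≤ ub r) ∧
      (∀ m : M, (∑ r ∈ R1, pc r m * v r) + (∑ r ∈ R1, -(rc m r) * v r) = 0) ∧
      (∀ rT ∈ RT, 0 < v rT)) :
    (∀ rT ∈ RT, rcts rT ⊆ mScope (↑(R1 ∪ R2)) rcts prds S) ∧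
    (∃ v : R → ℝ,
      (∀ r ∈ R1 ∪ R2, lb r ≤ v r ∧ v r ≤ ub r) ∧
      (∀ m : M, (∑ r ∈ R1 ∪ R2, pc r m * v r) + (∑ r ∈ R1 ∪ R2, -(rc m r) * v r) = 0) ∧
      (∀ rT ∈ RT, 0 < v rT)) := by
  obtain ⟨v, hvb, hvbal, hvt⟩ := hsto
  have hscope : mScope (↑R1) rcts prds S ⊆ mScope (↑(R1 ∪ R2)) rcts prds S := by
    intro x hx
    intro X hX
    exact hx X ⟨hX.1, fun r hr => hX.2 r (by simp [hr])⟩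
  refine ⟨fun rT hrT => (htop rT hrT).trans hscope, ?_⟩
  classical
  refine ⟨fun r => if r ∈ R1 then v r else 0, ?_, ?_, ?_⟩
  · intro r hr
    by_cases h : r ∈ R1
    · simpa [h] using hvb r h
    · have hr2 : r ∈ R2 \ R1 := by
        simp at hr; exact Finset.mem_sdiff.mpr ⟨hr.resolve_left h, h⟩
      have := hnew r hr2
      simp [h, this]
      linarith [(hbounds r).1, (hbounds r).2, this]
  · intro m
    have h1 : (∑ r ∈ R1 ∪ R2, pc r m * (if r ∈ R1 then v r else 0))
        = ∑ r ∈ R1, pc r m * v r := by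
      rw [← Finset.sum_subset Finset.subset_union_left
        (fun r _ hr => by simp [hr])]
      exact Finset.sum_congr rfl fun r hr => by simp [hr]
    have h2 : (∑ r ∈ R1 ∪ R2, -(rc m r) * (if r ∈ R1 then v r else 0))
        = ∑ r ∈ R1, -(rc m r) * v r := by
      rw [← Finset.sum_subset Finset.subset_union_left
        (fun r _ hr => by simp [hr])]
      exact Finset.sum_congr rfl fun r hr => by simp [hr]
    rw [h1, h2]; exact hvbal m
  · intro rT hrT
    simp [hRT hrT]
    exact hvt rT hrT
end

section
/- If a target reaction r_T is topologically activated from S in a network G = (R ∪ M, E), then there exists a subset R₀ ⊆ R with |R₀| ≤ |M| such that r_T is topologically activated from S in the subnetwork induced by R₀ ∪ {r_T}. -/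
namespace TopActAux

variable {R M : Type*} (Rset : Set R) (rcts prds : R → Set M) (S : Set M)

/-- Stages of the inductive closure. -/
def stage : ℕ → Set M
  | 0 => S
  | (n+1) => stage n ∪ ⋃ r ∈ {r | r ∈ Rset ∧ rcts r ⊆ stage n}, prds r

lemma stage_mono : Monotone (stage Rset rcts prds S) := by
  apply monotone_nat_of_le_succ
  intro n
  exact Set.subset_union_left

lemma seed_subset_mScope : S ⊆ mScope Rset rcts prds S := by
  intro m hm X hX
  exact hX.1 hm

lemma mScope_subset {X : Set M} (hS : S ⊆ X)
    (hX : ∀ r ∈ Rset, rcts r ⊆ X → prds r ⊆ X) :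
    mScope Rset rcts prds S ⊆ X :=
  Set.sInter_subset_of_mem ⟨hS, hX⟩

lemma mScope_closed {r : R} (hr : r ∈ Rset)
    (h : rcts r ⊆ mScope Rset rcts prds S) :
    prds r ⊆ mScope Rset rcts prds S := by
  intro p hp X hX
  exact hX.2 r hr (h.trans (mScope_subset Rset rcts prds S hX.1 hX.2)) hp

lemma stage_subset_mScope : ∀ n, stage Rset rcts prds S n ⊆ mScope Rset rcts prds S := by
  intro n
  induction n with
  | zero => exact seed_subset_mScope Rset rcts prds S
  | succ n ih =>
    intro m hm
    rcases hm with hm | hm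
    · exact ih hm
    · simp only [Set.mem_iUnion] at hm
      obtain ⟨r, ⟨hr, hsub⟩, hmem⟩ := hm
      exact mScope_closed Rset rcts prds S hr (hsub.trans ih) hmem

lemma mScope_subset_iUnion_stage [Fintype M] :
    mScope Rset rcts prds S ⊆ ⋃ n, stage Rset rcts prds S n := by
  apply mScope_subset
  · exact Set.subset_iUnion (stage Rset rcts prds S) 0
  · intro r hr hsub
    -- rcts r is finite, so contained in a single stage
    classical
    have hex : ∀ m : M, ∃ n : ℕ, m ∈ rcts r → m ∈ stage Rset rcts prds S n := by
      intro m
      by_cases hm : m ∈ rcts r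
      · obtain ⟨X, ⟨n, rfl⟩, hmX⟩ := hsub hm
        exact ⟨n, fun _ => hmX⟩
      · exact ⟨0, fun h => absurd h hm⟩
    choose f hf using hex
    set N := Finset.univ.sup f with hN
    have hall : rcts r ⊆ stage Rset rcts prds S N := by
      intro m hm
      exact stage_mono Rset rcts prds S (Finset.le_sup (Finset.mem_univ m)) (hf m hm)
    intro p hp
    refine Set.mem_iUnion.2 ⟨N + 1, Or.inr ?_⟩
    simp only [Set.mem_iUnion]
    exact ⟨r, ⟨hr, hall⟩, hp⟩

end TopActAux

open TopActAux in
/-- If a target reaction `rT` is topologically activated from `S` in a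
network with reaction set `Rset` over a finite metabolite set `M`, then there
is a subset `R₀ ⊆ Rset` of at most `|M|` reactions such that `rT` is
topologically activated from `S` in the subnetwork induced by `R₀ ∪ {rT}`. -/
theorem topActivated_small_subnetwork {R M : Type*} [Fintype M]
    (Rset : Set R) (rcts prds : R → Set M) (S : Set M)
    (rT : R) (hrT : rT ∈ Rset)
    (hact : rcts rT ⊆ mScope Rset rcts prds S) :
    ∃ R0 : Finset R, ↑R0 ⊆ Rset ∧ R0.card ≤ Fintype.card M ∧
      rcts rT ⊆ mScope ((↑R0 : Set R) ∪ {rT}) rcts prds S := by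
  classical
  haveI : Nonempty R := ⟨rT⟩
  set st := stage Rset rcts prds S with hst
  -- rank of a metabolite
  set rank : M → ℕ := fun m =>
    if h : ∃ n, m ∈ st n then Nat.find h else 0 with hrank
  have key : ∀ m : M, ∃ r : R, (∃ n, m ∈ st n) → m ∉ S →
      r ∈ Rset ∧ m ∈ prds r ∧ rcts r ⊆ st (rank m - 1) := by
    intro m
    by_cases h : ∃ n, m ∈ st n
    · by_cases hS : m ∈ S
      · exact ⟨Classical.arbitrary R, fun _ h' => absurd hS h'⟩
      · have hk : m ∈ st (Nat.find h) := Nat.find_spec h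
        have hk0 : Nat.find h ≠ 0 := by
          intro h0
          rw [h0] at hk
          exact hS hk
        have hrk : rank m = Nat.find h := by simp only [hrank]; rw [dif_pos h]
        obtain ⟨k, hkk⟩ := Nat.exists_eq_succ_of_ne_zero hk0
        rw [hkk] at hk
        have hnot : m ∉ st k := Nat.find_min h (by omega)
        rcases hk with hk | hk
        · exact absurd hk hnot
        · simp only [Set.mem_iUnion] at hk
          obtain ⟨r, ⟨hr, hsub⟩, hmem⟩ := hk
          refine ⟨r, fun _ _ => ⟨hr, hmem, ?_⟩⟩
          rw [hrk, hkk]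
          simpa using hsub
    · exact ⟨Classical.arbitrary R, fun h' => absurd h' h⟩
  choose w hw using key
  set T : Set M := (⋃ n, st n) \ S with hT
  have hTfin : T.Finite := Set.toFinite T
  have hIfin : (w '' T).Finite := hTfin.image w
  refine ⟨hIfin.toFinset, ?_, ?_, ?_⟩
  · intro r hr
    obtain ⟨m, hm, rfl⟩ := hIfin.mem_toFinset.1 hr
    exact (hw m (Set.mem_iUnion.1 hm.1) hm.2).1
  · calc hIfin.toFinset.card = (w '' T).ncard := (Set.ncard_eq_toFinset_card _ hIfin).symm
      _ ≤ T.ncard := Set.ncard_image_le hTfin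
      _ ≤ (Set.univ : Set M).ncard := Set.ncard_le_ncard (Set.subset_univ T) (Set.toFinite _)
      _ = Fintype.card M := by rw [Set.ncard_univ, Nat.card_eq_fintype_card]
  · -- main claim
    have main : ∀ n, st n ⊆ mScope ((↑hIfin.toFinset : Set R) ∪ {rT}) rcts prds S := by
      intro n
      induction n using Nat.strong_induction_on with
      | _ n ih =>
        intro m hm
        by_cases hS : m ∈ S
        · exact seed_subset_mScope _ rcts prds S hS
        · have hex : ∃ k, m ∈ st k := ⟨n, hm⟩
          obtain ⟨hr1, hr2, hr3⟩ := hw m hex hS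
          have hrk : rank m = Nat.find hex := by simp only [hrank]; rw [dif_pos hex]
          have hle : Nat.find hex ≤ n := Nat.find_le hm
          have hne : Nat.find hex ≠ 0 := by
            intro h0
            have := Nat.find_spec hex
            rw [h0] at this
            exact hS this
          have hlt : rank m - 1 < n := by rw [hrk]; omega
          have hsub : rcts (w m) ⊆ mScope ((↑hIfin.toFinset : Set R) ∪ {rT}) rcts prds S :=
            hr3.trans (ih _ hlt)
          have hwmem : w m ∈ (↑hIfin.toFinset : Set R) ∪ {rT} := by
            left
            simp only [Set.Finite.coe_toFinset]
            exact Set.mem_image_of_mem w ⟨Set.mem_iUnion.2 ⟨n, hm⟩, hS⟩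
          exact mScope_closed _ rcts prds S hwmem hsub hr2
    intro m hm
    obtain ⟨X, ⟨n, rfl⟩, hmX⟩ := mScope_subset_iUnion_stage Rset rcts prds S (hact hm)
    exact main n hmX
end
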